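/- arXiv:1307.2418 — 2 statements merged into one kernel-verified Lean document; each statement's English description precedes it below -/
import Mathlib

section
/- A subset of ℝ is bounded if and only if it is both statistically upward compact and statistically downward compact. -/
/-! A bounded set is sequentially compact, and the successive differences of a convergent sequence
tend to `0`, so only finitely many of them exceed `ε` in either direction. Conversely, if `E` is
unbounded above, one picks `x (n + 1) ∈ E` with `x (n + 1) ≥ x n + 1`; every subsequence then
climbs by at least `1` at every step, so the set of upward jumps has density `1`. Negating `E`
swaps the two notions. -/

def StatUpQC (x : ℕ → ℝ) : Prop :=
  ∀ ε > (0:ℝ), Filter.Tendsto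
    (fun n => (((Finset.range n).filter (fun k => ε ≤ x k - x (k+1))).card : ℝ) / n)
    Filter.atTop (nhds 0)

def StatDownQC (x : ℕ → ℝ) : Prop :=
  ∀ ε > (0:ℝ), Filter.Tendsto
    (fun n => (((Finset.range n).filter (fun k => ε ≤ x (k+1) - x k)).card : ℝ) / n)
    Filter.atTop (nhds 0)

def StatUpCompact (E : Set ℝ) : Prop :=
  ∀ x : ℕ → ℝ, (∀ n, x n ∈ E) → ∃ φ : ℕ → ℕ, StrictMono φ ∧ StatUpQC (x ∘ φ)

def StatDownCompact (E : Set ℝ) : Prop :=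
  ∀ x : ℕ → ℝ, (∀ n, x n ∈ E) → ∃ φ : ℕ → ℕ, StrictMono φ ∧ StatDownQC (x ∘ φ)

open Filter Finset Topology

section Density

variable {P : ℕ → Prop} [DecidablePred P]

lemma tendsto_card_filter_range_div_of_eventually_not (h : ∀ᶠ k in atTop, ¬ P k) :
    Tendsto (fun n : ℕ => (#{k ∈ range n | P k} : ℝ) / n) atTop (𝓝 0) := by
  obtain ⟨N, hN⟩ := eventually_atTop.1 h
  have hcard (n : ℕ) : (#{k ∈ range n | P k} : ℝ) ≤ N := by
    have hsub : {k ∈ range n | P k} ⊆ range N := fun k hk =>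
      mem_range.2 <| not_le.1 fun hNk => hN k hNk (mem_filter.1 hk).2
    exact_mod_cast (card_le_card hsub).trans_eq (card_range N)
  exact squeeze_zero (fun n => by positivity)
    (fun n => div_le_div_of_nonneg_right (hcard n) n.cast_nonneg)
    (tendsto_const_div_atTop_nhds_zero_nat (N : ℝ))

lemma tendsto_card_filter_range_div_of_forall (h : ∀ k, P k) :
    Tendsto (fun n : ℕ => (#{k ∈ range n | P k} : ℝ) / n) atTop (𝓝 1) := by
  refine tendsto_const_nhds.congr' ?_
  filter_upwards [eventually_gt_atTop 0] with n hn
  rw [filter_true_of_mem fun k _ => h k, card_range, div_self (by exact_mod_cast hn.ne')]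

end Density

section QuasiCauchy

variable {x : ℕ → ℝ}

lemma statUpQC_neg_iff : StatUpQC (-x) ↔ StatDownQC x := by
  simp only [StatUpQC, StatDownQC, Pi.neg_apply, neg_sub_neg]

lemma statUpQC_of_tendsto {a : ℝ} (h : Tendsto x atTop (𝓝 a)) : StatUpQC x := by
  intro ε hε
  have hdiff : Tendsto (fun k => x k - x (k + 1)) atTop (𝓝 0) := by
    simpa using h.sub (h.comp (tendsto_add_atTop_nat 1))
  apply tendsto_card_filter_range_div_of_eventually_not
  filter_upwards [hdiff.eventually (eventually_lt_nhds hε)] with k hk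
  exact not_le.2 hk

lemma statDownQC_of_tendsto {a : ℝ} (h : Tendsto x atTop (𝓝 a)) : StatDownQC x :=
  statUpQC_neg_iff.1 (statUpQC_of_tendsto h.neg)

lemma not_statDownQC_of_forall_le_sub {ε : ℝ} (hε : 0 < ε) (h : ∀ k, ε ≤ x (k + 1) - x k) :
    ¬ StatDownQC x := fun hx =>
  one_ne_zero <| tendsto_nhds_unique (tendsto_card_filter_range_div_of_forall h) (hx ε hε)

end QuasiCauchy

section Compact

variable {E : Set ℝ}

lemma statUpCompact_of_isBounded (hE : Bornology.IsBounded E) : StatUpCompact E := fun _ hx =>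
  let ⟨_, _, φ, hφ, hlim⟩ := tendsto_subseq_of_bounded hE hx
  ⟨φ, hφ, statUpQC_of_tendsto hlim⟩

lemma statDownCompact_of_isBounded (hE : Bornology.IsBounded E) : StatDownCompact E := fun _ hx =>
  let ⟨_, _, φ, hφ, hlim⟩ := tendsto_subseq_of_bounded hE hx
  ⟨φ, hφ, statDownQC_of_tendsto hlim⟩

lemma StatUpCompact.neg (h : StatUpCompact E) : StatDownCompact (-E) := fun x hx =>
  let ⟨φ, hφ, hq⟩ := h (-x) hx
  ⟨φ, hφ, statUpQC_neg_iff.1 hq⟩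

lemma exists_seq_mem_add_one_le_of_not_bddAbove (hE : ¬ BddAbove E) :
    ∃ x : ℕ → ℝ, (∀ n, x n ∈ E) ∧ ∀ m n, m < n → x m + 1 ≤ x n := by
  choose f hfE hlt using not_bddAbove_iff.1 hE
  let x : ℕ → ℝ := fun n => (fun y => f (y + 1))^[n] (f 0)
  have hstep (n : ℕ) : x n + 1 ≤ x (n + 1) := by
    simp only [x, Function.iterate_succ_apply']
    exact (hlt _).le
  refine ⟨x, fun n => ?_, fun m n hmn => ?_⟩
  · cases n with
    | zero => exact hfE 0
    | succ n => simp only [x, Function.iterate_succ_apply']; exact hfE _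
  · induction n, hmn using Nat.le_induction with
    | base => exact hstep m
    | succ n _ ih => linarith [hstep n]

lemma StatDownCompact.bddAbove (h : StatDownCompact E) : BddAbove E := by
  by_contra hE
  obtain ⟨x, hxE, hgap⟩ := exists_seq_mem_add_one_le_of_not_bddAbove hE
  obtain ⟨φ, hφ, hq⟩ := h x hxE
  exact not_statDownQC_of_forall_le_sub one_pos
    (fun k => le_sub_iff_add_le'.2 (hgap _ _ (hφ k.lt_succ_self))) hq

end Compact

theorem bounded_iff_statUpDownCompact (E : Set ℝ) :
    (BddAbove E ∧ BddBelow E) ↔ (StatUpCompact E ∧ StatDownCompact E) := by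
  constructor
  · rintro ⟨hA, hB⟩
    have hE : Bornology.IsBounded E := isBounded_iff_bddBelow_bddAbove.2 ⟨hB, hA⟩
    exact ⟨statUpCompact_of_isBounded hE, statDownCompact_of_isBounded hE⟩
  · rintro ⟨hup, hdown⟩
    exact ⟨hdown.bddAbove, bddAbove_neg.1 hup.neg.bddAbove⟩
end

section
/- If E ⊆ ℝ is statistically upward compact and f : E → ℝ is statistically upward continuous on E, then f is uniformly continuous on E. -/
def StatUpCont (f : ℝ → ℝ) (E : Set ℝ) : Prop :=
  ∀ x : ℕ → ℝ, (∀ n, x n ∈ E) → StatUpQC x → StatUpQC (fun n => f (x n))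

open Filter Finset Topology

def HasDensityZero (P : ℕ → Prop) [DecidablePred P] : Prop :=
  Tendsto (fun n => (#{k ∈ range n | P k} : ℝ) / n) atTop (𝓝 0)

namespace HasDensityZero

variable {P Q : ℕ → Prop} [DecidablePred P] [DecidablePred Q]

theorem of_card_le {g : ℕ → ℝ} (hg : Tendsto (fun n => g n / n) atTop (𝓝 0))
    (h : ∀ n, (#{k ∈ range n | P k} : ℝ) ≤ g n) : HasDensityZero P :=
  squeeze_zero (fun _ => by positivity) (fun n => div_le_div_of_nonneg_right (h n) n.cast_nonneg) hg

theorem mono (hQ : HasDensityZero Q) (h : ∀ k, P k → Q k) : HasDensityZero P :=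
  of_card_le hQ fun _ => mod_cast card_le_card (monotone_filter_right _ fun k _ => h k)

theorem or (hP : HasDensityZero P) (hQ : HasDensityZero Q) :
    HasDensityZero (fun k => P k ∨ Q k) :=
  of_card_le (g := fun n => #{k ∈ range n | P k} + #{k ∈ range n | Q k})
    (by simpa only [add_div, add_zero] using hP.add hQ) fun n => by
      rw [filter_or]
      exact mod_cast card_union_le _ _

theorem of_eventually_not (h : ∀ᶠ k in atTop, ¬P k) : HasDensityZero P := by
  obtain ⟨N, hN⟩ := eventually_atTop.1 h
  refine of_card_le (tendsto_const_div_atTop_nhds_zero_nat (N : ℝ)) fun n => ?_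
  have hsub : {k ∈ range n | P k} ⊆ range N := fun k hk => by
    by_contra hkN
    exact hN k (by simpa using hkN) (mem_filter.1 hk).2
  simpa using (card_le_card hsub : _ ≤ #(range N))

theorem comp_div_two (hP : HasDensityZero P) : HasDensityZero (fun m => P (m / 2)) := by
  refine of_card_le (g := fun n => 2 * #{k ∈ range n | P k})
    (by simpa only [mul_div_assoc, mul_zero] using hP.const_mul 2) fun n => ?_
  have hfiber : ∀ k ∈ {k ∈ range n | P k}, #{m ∈ {m ∈ range n | P (m / 2)} | m / 2 = k} ≤ 2 :=
    fun k _ => (card_le_card fun m hm => by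
      simp only [mem_filter] at hm
      simp only [mem_insert, mem_singleton]
      omega).trans (card_insert_le (2 * k) {2 * k + 1})
  have hmaps : ∀ m ∈ {m ∈ range n | P (m / 2)}, m / 2 ∈ {k ∈ range n | P k} := fun m hm => by
    simp only [mem_filter, mem_range] at hm ⊢
    exact ⟨by omega, hm.2⟩
  exact mod_cast card_le_mul_card_image_of_maps_to hmaps 2 hfiber

end HasDensityZero

theorem not_hasDensityZero_of_forall_two_mul {P : ℕ → Prop} [DecidablePred P]
    (h : ∀ k, P (2 * k)) : ¬HasDensityZero P := by
  intro hP
  have hcard : ∀ n : ℕ, (n : ℝ) / 2 ≤ #{k ∈ range n | P k} := fun n => by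
    have hsub : (range ((n + 1) / 2)).image (2 * ·) ⊆ {k ∈ range n | P k} := fun m hm => by
      obtain ⟨k, hk, rfl⟩ := mem_image.1 hm
      simp only [mem_filter, mem_range] at hk ⊢
      exact ⟨by omega, h k⟩
    have hle := card_le_card hsub
    rw [card_image_of_injective _ (mul_right_injective₀ two_ne_zero), card_range] at hle
    have hn : n ≤ #{k ∈ range n | P k} * 2 := by omega
    rw [div_le_iff₀ two_pos]
    exact_mod_cast hn
  have hhalf : (1 / 2 : ℝ) ≤ 0 := ge_of_tendsto hP <| eventually_atTop.2 ⟨1, fun n hn => by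
    rw [le_div_iff₀ (by exact_mod_cast hn)]
    linarith [hcard n]⟩
  norm_num at hhalf

def interleave {α : Type*} (u v : ℕ → α) (m : ℕ) : α :=
  if Even m then u (m / 2) else v (m / 2)

section Interleave

variable {α β : Type*} (u v : ℕ → α)

@[simp]
theorem interleave_two_mul (k : ℕ) : interleave u v (2 * k) = u k := by
  simp [interleave]

@[simp]
theorem interleave_two_mul_add_one (k : ℕ) : interleave u v (2 * k + 1) = v k := by
  simp [interleave, Nat.add_div_of_dvd_right]

theorem comp_interleave (f : α → β) : f ∘ interleave u v = interleave (f ∘ u) (f ∘ v) :=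
  funext fun _ => apply_ite f _ _ _

theorem interleave_mem {s : Set α} (hu : ∀ k, u k ∈ s) (hv : ∀ k, v k ∈ s) (m : ℕ) :
    interleave u v m ∈ s := by
  unfold interleave
  split_ifs
  exacts [hu _, hv _]

end Interleave

theorem interleave_sub_succ_le (u v : ℕ → ℝ) (m : ℕ) :
    interleave u v m - interleave u v (m + 1) ≤
      |u (m / 2) - v (m / 2)| + max (u (m / 2) - u (m / 2 + 1)) 0 := by
  obtain ⟨k, rfl | rfl⟩ := Nat.even_or_odd' m
  · rw [interleave_two_mul, interleave_two_mul_add_one, Nat.mul_div_cancel_left k two_pos]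
    linarith [le_abs_self (u k - v k), le_max_right (u k - u (k + 1)) 0]
  · rw [show (2 * k + 1) / 2 = k by omega, show 2 * k + 1 + 1 = 2 * (k + 1) by ring,
      interleave_two_mul, interleave_two_mul_add_one]
    linarith [neg_abs_le (u k - v k), le_max_left (u k - u (k + 1)) 0]

theorem statUpQC_interleave {u v : ℕ → ℝ} (hu : StatUpQC u)
    (huv : Tendsto (fun k => u k - v k) atTop (𝓝 0)) : StatUpQC (interleave u v) := by
  intro ε hε
  have hsmall : HasDensityZero (fun k => ε / 2 ≤ |u k - v k|) := by
    have habs : Tendsto (fun k => |u k - v k|) atTop (𝓝 0) := by simpa using huv.abs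
    exact .of_eventually_not <| (habs.eventually (gt_mem_nhds (half_pos hε))).mono
      fun _ => not_le.2
  refine ((hsmall.or (hu (ε / 2) (half_pos hε))).comp_div_two).mono fun m hm => ?_
  by_contra! hlt
  have hdrop := interleave_sub_succ_le u v m
  have hmax := max_lt hlt.2 (half_pos hε)
  linarith [hlt.1]

theorem not_statUpQC_interleave {u v : ℕ → ℝ} {ε : ℝ} (hε : 0 < ε)
    (h : ∀ k, ε ≤ u k - v k) : ¬StatUpQC (interleave u v) := fun huv =>
  not_hasDensityZero_of_forall_two_mul (by simpa using h) (huv ε hε)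

theorem exists_seqs_tendsto_sub_zero_le_sub {f : ℝ → ℝ} {E : Set ℝ} {ε : ℝ}
    (h : ∀ δ > 0, ∃ x ∈ E, ∃ y ∈ E, |x - y| < δ ∧ ε ≤ |f x - f y|) :
    ∃ u v : ℕ → ℝ, (∀ k, u k ∈ E) ∧ (∀ k, v k ∈ E) ∧
      Tendsto (fun k => u k - v k) atTop (𝓝 0) ∧ ∀ k, ε ≤ f (u k) - f (v k) := by
  have hpair : ∀ k : ℕ, ∃ x ∈ E, ∃ y ∈ E, |x - y| < 1 / (k + 1) ∧ ε ≤ f x - f y := fun k => by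
    obtain ⟨x, hx, y, hy, hxy, hfxy⟩ := h (1 / (k + 1)) (by positivity)
    rcases le_abs'.1 hfxy with hneg | hpos
    · exact ⟨y, hy, x, hx, by rwa [abs_sub_comm], by linarith⟩
    · exact ⟨x, hx, y, hy, hxy, hpos⟩
  choose u hu v hv huv hfuv using hpair
  refine ⟨u, v, hu, hv, ?_, hfuv⟩
  exact squeeze_zero_norm (fun k => (huv k).le) tendsto_one_div_add_atTop_nhds_zero_nat

theorem statUpCont_uniformCont (f : ℝ → ℝ) (E : Set ℝ)
    (hE : StatUpCompact E) (hf : StatUpCont f E) :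
    ∀ ε > (0:ℝ), ∃ δ > (0:ℝ), ∀ x ∈ E, ∀ y ∈ E, |x - y| < δ → |f x - f y| < ε := by
  by_contra! hcon
  obtain ⟨ε, hε, hpairs⟩ := hcon
  obtain ⟨u, v, hu, hv, huv, hfuv⟩ := exists_seqs_tendsto_sub_zero_le_sub hpairs
  obtain ⟨φ, hφ, huφ⟩ := hE u hu
  have hw : StatUpQC (interleave (u ∘ φ) (v ∘ φ)) :=
    statUpQC_interleave huφ (huv.comp hφ.tendsto_atTop)
  have hfw := hf _ (interleave_mem _ _ (fun k => hu (φ k)) fun k => hv (φ k)) hw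
  rw [← Function.comp_def, comp_interleave] at hfw
  exact not_statUpQC_interleave hε (fun k => hfuv (φ k)) hfw
end
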